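/- In every decreasing CMDP there exists a memoryless strategy σ such that σ loaded with the minimal safety vector ml_S surely satisfies the safety objective, i.e., for every state s with ml_S(s) ≤ cap and every d with ml_S(s) ≤ d ≤ cap, all σ-compatible s-initiated runs loaded with d are safe. -/

import Mathlib

/-!
In every state `u`, play the first action of some strategy that is safe from `u` with load
`mlS u`. Along any run of this memoryless strategy the invariant "the current level is at least
`mlS` of the current state" is preserved: that action keeps the level defined, and every
successor `t` is safe (under the original strategy, shifted by one step) with the remaining level,
so minimality of `mlS` bounds `mlS t` by that level; since the level is monotone in the load,
the same holds from any higher level.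
-/

open Classical

/-- A consumption Markov decision process. -/
structure CMDP (S A : Type) [Fintype S] [Fintype A] where
  /-- transition function -/
  δ : S → A → S → NNReal
  δ_sum : ∀ s a, ∑ t, δ s a t = 1
  /-- consumption function -/
  γ : S → A → ℕ
  /-- reload states -/
  R : Finset S
  /-- capacity -/
  cap : ℕ

namespace CMDP

variable {S A : Type} [Fintype S] [Fintype A] [DecidableEq S] [DecidableEq A]

/-- successors with positive transition probability -/
noncomputable def Succ (M : CMDP S A) (s : S) (a : A) : Finset S :=
  Finset.univ.filter (fun t => 0 < M.δ s a t)

/-- A (history-dependent) strategy: takes the initial load, the history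
(list of state-action steps performed so far) and the current state. -/
def Strat (S A : Type) := ℕ → List (S × A) → S → A

/-- An infinite run: a sequence of states and actions. -/
structure Run (S A : Type) where
  st : ℕ → S
  ac : ℕ → A

/-- the history (list of steps) formed by the first `i` steps of a run -/
def hist (ρ : Run S A) (i : ℕ) : List (S × A) :=
  (List.range i).map (fun j => (ρ.st j, ρ.ac j))

/-- a run is compatible with strategy `σ` under initial load `d` -/
def Compatible (M : CMDP S A) (σ : Strat S A) (d : ℕ) (ρ : Run S A) : Prop :=
  ∀ i, ρ.ac i = σ d (hist ρ i) (ρ.st i) ∧ 0 < M.δ (ρ.st i) (ρ.ac i) (ρ.st (i+1))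

/-- one step of the resource-level evolution; `none` is ⊥ (exhaustion) -/
def nextLevel (M : CMDP S A) (s : S) (a : A) : Option ℕ → Option ℕ
  | none => none
  | some l =>
      if s ∈ M.R then (if M.γ s a ≤ M.cap then some (M.cap - M.γ s a) else none)
      else (if M.γ s a ≤ l then some (l - M.γ s a) else none)

/-- resource levels along a path, starting from initial load `d` -/
def levels (M : CMDP S A) (d : ℕ) (st : ℕ → S) (ac : ℕ → A) : ℕ → Option ℕ
  | 0 => some d
  | i+1 => M.nextLevel (st i) (ac i) (levels M d st ac i)

/-- a run loaded with `d` is safe: ⊥ never occurs among the resource levels -/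
def SafeRun (M : CMDP S A) (d : ℕ) (ρ : Run S A) : Prop :=
  ∀ i, levels M d ρ.st ρ.ac i ≠ none

/-- all `σ`-compatible runs from `s` loaded with `d` are safe -/
def AllSafe (M : CMDP S A) (σ : Strat S A) (s : S) (d : ℕ) : Prop :=
  ∀ ρ : Run S A, Compatible M σ d ρ → ρ.st 0 = s → SafeRun M d ρ

/-- the resource level after a finite history -/
def levelOfHist (M : CMDP S A) (d : ℕ) (h : List (S × A)) : Option ℕ :=
  h.foldl (fun r p => M.nextLevel p.1 p.2 r) (some d)

/-- action value of `a` in `s` based on vector `v` -/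
noncomputable def AV (M : CMDP S A) (v : S → ℕ∞) (s : S) (a : A) : ℕ∞ :=
  (M.γ s a : ℕ∞) + (M.Succ s a).sup v

/-- the Bellman-style functional 𝓕 -/
noncomputable def Ffun (M : CMDP S A) (T : Finset S) (v : S → ℕ∞) : S → ℕ∞ :=
  fun s => if s ∈ T then 0 else Finset.univ.inf (fun a => M.AV v s a)

/-- the initial vector `x_T`: 0 on `T` and ∞ elsewhere -/
noncomputable def xT (T : Finset S) : S → ℕ∞ := fun s => if s ∈ T then 0 else ⊤

/-- truncation to zero on `T` -/
noncomputable def trunc0 (T : Finset S) (v : S → ℕ∞) : S → ℕ∞ :=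
  fun s => if s ∈ T then 0 else v s

/-- the functional 𝓖 (for reachability in at least one step) -/
noncomputable def Gfun (M : CMDP S A) (T : Finset S) (v : S → ℕ∞) : S → ℕ∞ :=
  fun s => Finset.univ.inf (fun a => M.AV (trunc0 T v) s a)

/-- bounded non-reloading reachability objective `Reach_T^i` -/
def NRReachB (M : CMDP S A) (T : Finset S) (i : ℕ) (d : ℕ) (ρ : Run S A) : Prop :=
  ∃ f ≤ i, ρ.st f ∈ T ∧ (∑ j ∈ Finset.range f, M.γ (ρ.st j) (ρ.ac j)) ≤ d

/-- non-reloading reachability objective -/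
def NRReach (M : CMDP S A) (T : Finset S) (d : ℕ) (ρ : Run S A) : Prop :=
  ∃ i, NRReachB M T i d ρ

/-- non-reloading reachability in at least one step -/
def NRReachPlus (M : CMDP S A) (T : Finset S) (d : ℕ) (ρ : Run S A) : Prop :=
  ∃ f, 1 ≤ f ∧ ρ.st f ∈ T ∧ (∑ j ∈ Finset.range f, M.γ (ρ.st j) (ρ.ac j)) ≤ d

/-- sure satisfaction of an objective from `s` loaded with `d` -/
def SureSat (M : CMDP S A) (σ : Strat S A) (s : S) (d : ℕ)
    (O : ℕ → Run S A → Prop) : Prop :=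
  ∀ ρ, Compatible M σ d ρ → ρ.st 0 = s → O d ρ

/-- a vector of loads is sufficient for surely satisfying an objective -/
def SatVec (M : CMDP S A) (O : ℕ → Run S A → Prop) (x : S → ℕ∞) : Prop :=
  ∃ σ : Strat S A, ∀ s (d : ℕ), x s = (d : ℕ∞) → SureSat M σ s d O

/-- `x` is the componentwise-minimal vector satisfying `Sat` -/
def IsML {S : Type} (Sat : (S → ℕ∞) → Prop) (x : S → ℕ∞) : Prop :=
  Sat x ∧ ∀ y, Sat y → x ≤ y

/-- a vector of loads is sufficient for safety -/
def SafetySat (M : CMDP S A) (x : S → ℕ∞) : Prop :=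
  ∃ σ : Strat S A, ∀ s (d : ℕ), x s = (d : ℕ∞) → AllSafe M σ s d

/-- a decreasing CMDP: every cycle contains a positive-consumption transition -/
def Decreasing (M : CMDP S A) : Prop :=
  ∀ (n : ℕ) (st : ℕ → S) (ac : ℕ → A), 0 < n →
    (∀ i < n, 0 < M.δ (st i) (ac i) (st (i+1))) → st 0 = st n →
    ∃ i < n, 0 < M.γ (st i) (ac i)

/-- a valid finite path of length `n` -/
def ValidPath (M : CMDP S A) (n : ℕ) (st : ℕ → S) (ac : ℕ → A) : Prop :=
  ∀ i < n, 0 < M.δ (st i) (ac i) (st (i+1))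

/-- a simple path: no proper infix forms a cycle -/
def SimplePath (M : CMDP S A) (n : ℕ) (st : ℕ → S) (ac : ℕ → A) : Prop :=
  ValidPath M n st ac ∧ ∀ i j, i < j → j ≤ n → st i = st j → i = 0 ∧ j = n

/-- probability, under strategy `σ` with load `d` and past history `h`, that the
next `n` steps (states s₁ … s_{n+1}) avoid `T`. -/
noncomputable def probAvoid (M : CMDP S A) (T : Finset S) (σ : Strat S A) (d : ℕ) :
    ℕ → List (S × A) → S → NNReal
  | 0, _, s => if s ∈ T then 0 else 1
  | n+1, h, s =>
      if s ∈ T then 0 else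
      ∑ t, M.δ s (σ d h s) t * probAvoid M T σ d n (h ++ [(s, σ d h s)]) t

/-- probability, under strategy `σ` with load `d` and past history `h`, that the
next `n` steps contain fewer than `k` visits to `T`. -/
noncomputable def probFew (M : CMDP S A) (T : Finset S) (σ : Strat S A) (d : ℕ) :
    ℕ → ℕ → List (S × A) → S → NNReal
  | 0, k, _, s => if k ≤ (if s ∈ T then 1 else 0) then 0 else 1
  | n+1, k, h, s =>
      if k ≤ (if s ∈ T then 1 else 0) then 0 else
      ∑ t, M.δ s (σ d h s) t *
        probFew M T σ d n (k - (if s ∈ T then 1 else 0)) (h ++ [(s, σ d h s)]) t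

/-- hope value of successor `s'` for `a` in `s`, based on `x` and safety vector `mlS` -/
noncomputable def HV (M : CMDP S A) (mlS : S → ℕ∞) (x : S → ℕ∞)
    (s : S) (a : A) (s' : S) : ℕ∞ :=
  max (x s') (((M.Succ s a).erase s').sup mlS)

/-- safe value of `a` in `s` based on `x` and safety vector `mlS` -/
noncomputable def SV (M : CMDP S A) (mlS : S → ℕ∞) (x : S → ℕ∞) (s : S) (a : A) : ℕ∞ :=
  (M.γ s a : ℕ∞) + (M.Succ s a).inf (fun s' => HV M mlS x s a s')

/-- thresholded safe value: only successors with probability at least `θ` count -/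
noncomputable def SVθ (M : CMDP S A) (mlS : S → ℕ∞) (θ : NNReal) (x : S → ℕ∞)
    (s : S) (a : A) : ℕ∞ :=
  (M.γ s a : ℕ∞) +
    ((M.Succ s a).filter (fun s' => θ ≤ M.δ s a s')).inf (fun s' => HV M mlS x s a s')

/-- the truncation operator ⌈·⌉_{R'}^{cap} -/
noncomputable def truncRset (M : CMDP S A) (R' : Finset S) (x : S → ℕ∞) : S → ℕ∞ :=
  fun s => if (M.cap : ℕ∞) < x s then ⊤ else if s ∈ R' then 0 else x s

/-- the functional 𝓐 -/
noncomputable def Afun (M : CMDP S A) (T : Finset S) (mlS : S → ℕ∞)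
    (x : S → ℕ∞) : S → ℕ∞ :=
  fun s => if s ∈ T then mlS s else Finset.univ.inf (fun a => SV M mlS x s a)

/-- the operator 𝓑 = ⌈𝓐(·)⌉_R^cap -/
noncomputable def Bfun (M : CMDP S A) (T : Finset S) (mlS : S → ℕ∞)
    (x : S → ℕ∞) : S → ℕ∞ :=
  truncRset M M.R (Afun M T mlS x)

/-- the thresholded functional 𝓐_θ -/
noncomputable def Aθfun (M : CMDP S A) (T : Finset S) (mlS : S → ℕ∞) (θ : NNReal)
    (x : S → ℕ∞) : S → ℕ∞ :=
  fun s => if s ∈ T then mlS s else Finset.univ.inf (fun a => SVθ M mlS θ x s a)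

/-- the thresholded operator 𝓑_θ -/
noncomputable def Bθfun (M : CMDP S A) (T : Finset S) (mlS : S → ℕ∞) (θ : NNReal)
    (x : S → ℕ∞) : S → ℕ∞ :=
  truncRset M M.R (Aθfun M T mlS θ x)

/-- the initial vector `y_T`: `mlS` on `T` and ∞ elsewhere -/
noncomputable def yT (M : CMDP S A) (T : Finset S) (mlS : S → ℕ∞) : S → ℕ∞ :=
  fun s => if s ∈ T then mlS s else ⊤

/-- a vector of loads suffices for safely reaching `T` within `i` steps with
positive probability -/
def PosReachSatB (M : CMDP S A) (T : Finset S) (i : ℕ) (x : S → ℕ∞) : Prop :=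
  ∃ σ : Strat S A, ∀ s (d : ℕ), x s = (d : ℕ∞) →
    AllSafe M σ s d ∧ probAvoid M T σ d i [] s < 1

/-- a vector of loads suffices for safely reaching `T` with positive probability -/
def PosReachSat (M : CMDP S A) (T : Finset S) (x : S → ℕ∞) : Prop :=
  ∃ σ : Strat S A, ∀ s (d : ℕ), x s = (d : ℕ∞) →
    AllSafe M σ s d ∧ ∃ i, probAvoid M T σ d i [] s < 1

/-- a vector of loads suffices for safely reaching `T` almost surely -/
def ASReachSat (M : CMDP S A) (T : Finset S) (x : S → ℕ∞) : Prop :=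
  ∃ σ : Strat S A, ∀ s (d : ℕ), x s = (d : ℕ∞) →
    d ≤ M.cap ∧ AllSafe M σ s d ∧ (⨅ n, probAvoid M T σ d n [] s) = 0

/-- a vector of loads suffices for safely visiting `T` infinitely often a.s. -/
def ASBuchiSat (M : CMDP S A) (T : Finset S) (x : S → ℕ∞) : Prop :=
  ∃ σ : Strat S A, ∀ s (d : ℕ), x s = (d : ℕ∞) →
    d ≤ M.cap ∧ AllSafe M σ s d ∧ ∀ k : ℕ, (⨅ n, probFew M T σ d n k [] s) = 0

/-- a safe action in `s` with resource level `l` (w.r.t. the safety vector `mlS`) -/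
def SafeAct (M : CMDP S A) (mlS : S → ℕ∞) (s : S) (l : ℕ) (a : A) : Prop :=
  AV M mlS s a ≤ (l : ℕ∞) ∨ (AV M mlS s a ≤ (M.cap : ℕ∞) ∧ s ∈ M.R) ∨
    (M.cap : ℕ∞) < mlS s

/-- a safe strategy picks a safe action whenever one exists -/
def SafeStrat (M : CMDP S A) (mlS : S → ℕ∞) (σ : Strat S A) : Prop :=
  ∀ (d : ℕ) (h : List (S × A)) (s : S) (l : ℕ), levelOfHist M d h = some l →
    (∃ a, SafeAct M mlS s l a) → SafeAct M mlS s l (σ d h s)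

/-- the CMDP `C(R')`: as `M`, but with reload set `R'` -/
def withReloads (M : CMDP S A) (R' : Finset S) : CMDP S A :=
  { M with R := R' }

/-- a finite-memory strategy -/
def FiniteMemory (σ : Strat S A) : Prop :=
  ∃ (Mem : Type) (_ : Finite Mem) (upd : Mem → S × A → Mem) (m0 : ℕ → Mem)
    (out : Mem → S → A), ∀ d h s, σ d h s = out (h.foldl upd (m0 d)) s

/-- the modified CMDP C→T with a fresh absorbing reload state `sink = none` -/
noncomputable def toSink (M : CMDP S A) (T : Finset S) (mlS : S → ℕ∞) :
    CMDP (Option S) A where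
  δ := fun s a t =>
    match s with
    | none => if t = none then 1 else 0
    | some s' =>
        if s' ∈ T then (if t = none then 1 else 0)
        else (match t with
              | none => 0
              | some t' => M.δ s' a t')
  δ_sum := by
    intro s a
    cases s with
    | none => simp [Fintype.sum_option]
    | some s' =>
        by_cases hs : s' ∈ T
        · simp [hs, Fintype.sum_option]
        · simp [hs, Fintype.sum_option, M.δ_sum]
  γ := fun s a =>
    match s with
    | none => 1
    | some s' =>
        if s' ∈ T then (if mlS s' = ⊤ then M.cap + 1 else (mlS s').toNat)
        else M.γ s' a
  R := insert none (M.R.image some)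
  cap := M.cap

end CMDP

namespace CMDP

variable {S A : Type}

def Run.cons (s : S) (a : A) (ρ : Run S A) : Run S A where
  st | 0 => s | i + 1 => ρ.st i
  ac | 0 => a | i + 1 => ρ.ac i

theorem hist_cons_succ (s : S) (a : A) (ρ : Run S A) (i : ℕ) :
    hist (Run.cons s a ρ) (i + 1) = (s, a) :: hist ρ i := by
  simp only [hist, List.range_succ_eq_map, List.map_cons, List.map_map]
  rfl

variable [Fintype S] [Fintype A]

theorem exists_δ_pos (M : CMDP S A) (s : S) (a : A) : ∃ t, 0 < M.δ s a t := by
  by_contra! h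
  have hzero : ∑ t, M.δ s a t = 0 := Finset.sum_eq_zero fun t _ => le_antisymm (h t) zero_le
  exact one_ne_zero (M.δ_sum s a ▸ hzero)

theorem exists_compatible (M : CMDP S A) (σ : Strat S A) (d : ℕ) (s : S) :
    ∃ ρ : Run S A, Compatible M σ d ρ ∧ ρ.st 0 = s := by
  choose next hnext using M.exists_δ_pos
  -- `path n` is the pair (history of the first `n` steps, current state)
  let path : ℕ → List (S × A) × S := fun n =>
    Nat.rec ([], s) (fun _ p => (p.1 ++ [(p.2, σ d p.1 p.2)], next p.2 (σ d p.1 p.2))) n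
  let ρ : Run S A := ⟨fun n => (path n).2, fun n => σ d (path n).1 (path n).2⟩
  have hist_eq : ∀ n, hist ρ n = (path n).1 := by
    intro n
    induction n with
    | zero => rfl
    | succ n ih =>
      simp only [hist] at ih ⊢
      rw [List.range_succ, List.map_append, ih]
      rfl
  exact ⟨ρ, fun i => ⟨by rw [hist_eq], hnext _ _⟩, rfl⟩

variable [DecidableEq S]

theorem levels_cons_succ (M : CMDP S A) {s : S} {a : A} {d e : ℕ}
    (he : M.nextLevel s a (some d) = some e) (ρ : Run S A) (i : ℕ) :
    levels M d (Run.cons s a ρ).st (Run.cons s a ρ).ac (i + 1) = levels M e ρ.st ρ.ac i := by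
  induction i with
  | zero => exact he
  | succ i ih => exact congrArg (M.nextLevel _ _) ih

theorem nextLevel_mono (M : CMDP S A) {s : S} {a : A} {d e l : ℕ}
    (he : M.nextLevel s a (some d) = some e) (hdl : d ≤ l) :
    ∃ e', M.nextLevel s a (some l) = some e' ∧ e ≤ e' := by
  by_cases hR : s ∈ M.R
  · exact ⟨e, by simpa [nextLevel, hR] using he, le_rfl⟩
  · simp only [nextLevel, hR, if_false, Option.ite_none_right_eq_some, Option.some.injEq] at he
    obtain ⟨hγ, rfl⟩ := he
    exact ⟨l - M.γ s a, by simp [nextLevel, hR, hγ.trans hdl], by omega⟩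

theorem AllSafe.step {M : CMDP S A} {σ : Strat S A} {s : S} {d : ℕ}
    (hsafe : AllSafe M σ s d) :
    ∃ e, M.nextLevel s (σ d [] s) (some d) = some e ∧
      ∀ t, 0 < M.δ s (σ d [] s) t → AllSafe M (fun _ h u => σ d ((s, σ d [] s) :: h) u) t e := by
  set a := σ d [] s
  obtain ⟨ρ₀, hρ₀, hρ₀s⟩ := M.exists_compatible σ d s
  obtain ⟨e, he⟩ := Option.ne_none_iff_exists'.mp (hsafe ρ₀ hρ₀ hρ₀s 1)
  have ha : ρ₀.ac 0 = a := by rw [(hρ₀ 0).1, hρ₀s]; rfl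
  have hstep : M.nextLevel s a (some d) = some e := by
    rw [← he, ← hρ₀s, ← ha]; rfl
  refine ⟨e, hstep, fun t ht ρ hρ hρt i => ?_⟩
  have hcons : Compatible M σ d (Run.cons s a ρ) := by
    rintro (_ | i)
    · exact ⟨rfl, hρt ▸ ht⟩
    · exact ⟨by rw [hist_cons_succ]; exact (hρ i).1, (hρ i).2⟩
  rw [← levels_cons_succ M hstep]
  exact hsafe _ hcons rfl (i + 1)

theorem le_of_allSafe {M : CMDP S A} {mlS : S → ℕ∞}
    (hmin : ∀ y, SafetySat M y → mlS ≤ y) {σ : Strat S A} {t : S} {e : ℕ}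
    (hsafe : AllSafe M σ t e) : mlS t ≤ e := by
  have hsat : SafetySat M (Function.update (fun _ => ⊤) t (e : ℕ∞)) := by
    refine ⟨σ, fun u d hud => ?_⟩
    by_cases hu : u = t
    · subst hu
      rw [Function.update_self, Nat.cast_inj] at hud
      exact hud ▸ hsafe
    · simp [hu] at hud
  simpa using hmin _ hsat t

theorem allSafe_of_invariant (M : CMDP S A) (act : S → A) (v : S → ℕ∞)
    (hinv : ∀ u (l : ℕ), v u ≤ l → ∃ l', M.nextLevel u (act u) (some l) = some l' ∧
      ∀ t, 0 < M.δ u (act u) t → v t ≤ l')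
    {s : S} {d : ℕ} (hd : v s ≤ d) : AllSafe M (fun _ _ u => act u) s d := by
  intro ρ hρ hρs
  have hlevel : ∀ i, ∃ l : ℕ, levels M d ρ.st ρ.ac i = some l ∧ v (ρ.st i) ≤ l := by
    intro i
    induction i with
    | zero => exact ⟨d, rfl, hρs ▸ hd⟩
    | succ i ih =>
      obtain ⟨l, hl, hvl⟩ := ih
      obtain ⟨l', hl', hsucc⟩ := hinv _ l hvl
      have hac : ρ.ac i = act (ρ.st i) := (hρ i).1
      refine ⟨l', ?_, hsucc _ (hac ▸ (hρ i).2)⟩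
      show M.nextLevel _ _ (levels M d ρ.st ρ.ac i) = _
      rw [hl, hac, hl']
  intro i hnone
  obtain ⟨l, hl, -⟩ := hlevel i
  exact Option.some_ne_none l (hl ▸ hnone)

end CMDP

open CMDP in
theorem stmt7_general {S A : Type} [Fintype S] [Fintype A] [DecidableEq S]
    (M : CMDP S A)
    (mlS : S → ℕ∞) (hml : IsML (SafetySat M) mlS) :
    ∃ act : S → A, ∀ (s : S) (d : ℕ), mlS s ≤ (d : ℕ∞) → d ≤ M.cap →
      AllSafe M (fun _ _ t => act t) s d := by
  obtain ⟨σ, hσ⟩ := hml.1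
  refine ⟨fun u => σ (mlS u).toNat [] u, fun s d hd _ => allSafe_of_invariant M _ mlS ?_ hd⟩
  intro u l hul
  have hfin : mlS u = (mlS u).toNat := (ENat.natCast_toNat (ne_top_of_le_ne_top (by simp) hul)).symm
  obtain ⟨e, he, hsucc⟩ := (hσ u _ hfin).step
  obtain ⟨l', hl', hel'⟩ := M.nextLevel_mono he (by exact_mod_cast hfin ▸ hul)
  exact ⟨l', hl', fun t ht => (le_of_allSafe hml.2 (hsucc t ht)).trans (by exact_mod_cast hel')⟩

open CMDP in
/-- in every decreasing CMDP there is a memoryless strategy that,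
loaded with the minimal safety vector, surely satisfies the safety objective. -/
theorem stmt7 {S A : Type} [Fintype S] [Fintype A] [DecidableEq S] [DecidableEq A]
    (M : CMDP S A) (hdec : Decreasing M)
    (mlS : S → ℕ∞) (hml : IsML (SafetySat M) mlS) :
    ∃ act : S → A, ∀ (s : S) (d : ℕ), mlS s ≤ (d : ℕ∞) → d ≤ M.cap →
      AllSafe M (fun _ _ t => act t) s d :=
  stmt7_general M mlS hml
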